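/- arXiv:2305.00140 — 2 statements merged into one kernel-verified Lean document; each statement's English description precedes it below -/
import Mathlib

section
/- Let C = {x, z} ∪ J be a partition of the set of alternatives of an election with voting profile V such that z ≥_{3/4} x and x ≥_{3/4} y for all y ∈ J. Then for every partition J = A ∪ B ∪ C' into pairwise disjoint linearly ordered sets with B nonempty, d³(A z B x C', V) > d³(A z x B C', V). -/
open Finset

variable {α : Type}

/-- A ranking of the alternatives: a duplicate-free list containing every
alternative; earlier in the list means more preferred. -/
def IsRanking (l : List α) : Prop := l.Nodup ∧ ∀ a : α, a ∈ l

/-- The 3-wise Kendall tau distance between two rankings: the number of subsets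
`S` with `|S| ≤ 3` on which the two rankings have different top elements. -/
def d3 [Fintype α] [DecidableEq α] (l m : List α) : ℕ :=
  ((Finset.univ : Finset α).powerset.filter
    (fun S => S.card ≤ 3 ∧ ∃ a ∈ S, ∃ b ∈ S, a ≠ b ∧
      (∀ c ∈ S, l.idxOf a ≤ l.idxOf c) ∧ (∀ c ∈ S, m.idxOf b ≤ m.idxOf c))).card

/-- Total 3-wise Kendall tau distance from a ranking to a voting profile. -/
def d3V [Fintype α] [DecidableEq α] (l : List α) (V : Multiset (List α)) : ℕ :=
  (V.map (fun v => d3 l v)).sum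

/-- A 3-wise median of the voting profile `V`. -/
def IsMedian3 [Fintype α] [DecidableEq α] (V : Multiset (List α)) (l : List α) : Prop :=
  IsRanking l ∧ ∀ m : List α, IsRanking m → d3V l V ≤ d3V m V

/-- The 2-wise Kendall tau distance between two rankings: the number of
two-element subsets on which the relative orders differ. -/
def d2 [Fintype α] [DecidableEq α] (l m : List α) : ℕ :=
  ((Finset.univ : Finset α).powerset.filter
    (fun S => S.card = 2 ∧ ∃ a ∈ S, ∃ b ∈ S,
      l.idxOf a < l.idxOf b ∧ m.idxOf b < m.idxOf a)).card

/-- Total 2-wise Kendall tau distance from a ranking to a voting profile. -/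
def d2V [Fintype α] [DecidableEq α] (l : List α) (V : Multiset (List α)) : ℕ :=
  (V.map (fun v => d2 l v)).sum

/-- A 2-wise median of the voting profile `V`. -/
def IsMedian2 [Fintype α] [DecidableEq α] (V : Multiset (List α)) (l : List α) : Prop :=
  IsRanking l ∧ ∀ m : List α, IsRanking m → d2V l V ≤ d2V m V

/-- `x ≥ₛ y`: `x` is ranked before `y` in at least `s·|V|` votes. -/
def geq [DecidableEq α] (V : Multiset (List α)) (s : ℝ) (x y : α) : Prop :=
  s * (V.card : ℝ) ≤ (V.countP (fun v => v.idxOf x < v.idxOf y) : ℝ)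

/-- `x` is a non-dirty alternative with respect to the threshold `s`. -/
def NonDirty [DecidableEq α] (V : Multiset (List α)) (s : ℝ) (x : α) : Prop :=
  ∀ y : α, y ≠ x → geq V s x y ∨ geq V s y x

/-- The election satisfies the `3/4`-majority rule with respect to the 3-wise
Kemeny voting scheme. -/
def Satisfies34 [Fintype α] [DecidableEq α] (V : Multiset (List α)) : Prop :=
  ∀ x : α, NonDirty V (3/4) x → ∀ y : α, y ≠ x →
    (geq V (3/4) x y → ∀ π : List α, IsMedian3 V π → π.idxOf x < π.idxOf y) ∧
    (geq V (3/4) y x → ∀ π : List α, IsMedian3 V π → π.idxOf y < π.idxOf x)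

/-- `n_{xy}`: the number of votes ranking `x` before `y`. -/
def nn2 [DecidableEq α] (V : Multiset (List α)) (x y : α) : ℕ :=
  V.countP (fun v => v.idxOf x < v.idxOf y)

/-- `n_{xyz}`: the number of votes ranking `x` before `y` before `z`. -/
def nn3 [DecidableEq α] (V : Multiset (List α)) (x y z : α) : ℕ :=
  V.countP (fun v => v.idxOf x < v.idxOf y ∧ v.idxOf y < v.idxOf z)

/-- `n_{xyzt}`: the number of votes ranking `x` before `y` before `z` before `t`. -/
def nn4 [DecidableEq α] (V : Multiset (List α)) (x y z t : α) : ℕ :=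
  V.countP (fun v => v.idxOf x < v.idxOf y ∧ v.idxOf y < v.idxOf z ∧
    v.idxOf z < v.idxOf t)

/-- `δ_{xy} = n_{xy} - n_{yx}`. -/
def del [DecidableEq α] (V : Multiset (List α)) (x y : α) : ℤ :=
  (nn2 V x y : ℤ) - nn2 V y x

/-- `P_{x,y,z}`. -/
def Pq [DecidableEq α] (V : Multiset (List α)) (x y z : α) : ℤ :=
  3 * (nn3 V x z y : ℤ) + nn3 V x y z + nn3 V z x y + nn3 V z y x
    - 4 * nn3 V y z x - 2 * nn3 V y x z

/-- `Q_{x,y,z}`. -/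
def Qq [DecidableEq α] (V : Multiset (List α)) (x y z : α) : ℤ :=
  (nn3 V x y z : ℤ) + nn3 V x z y - nn3 V y x z - nn3 V y z x

/-- `R_{y,x,z,t}`. -/
def Rr [DecidableEq α] (V : Multiset (List α)) (y x z t : α) : ℤ :=
  2 * (nn4 V y z t x : ℤ) + 2 * nn4 V y z x t + nn4 V y t z x + nn4 V y t x z

/-- `S_{y,x,z,t} = R_{y,x,z,t} - R_{x,y,z,t}`. -/
def Ss [DecidableEq α] (V : Multiset (List α)) (y x z t : α) : ℤ :=
  Rr V y x z t - Rr V x y z t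

/-!
Moving `x` forward past `B` changes the top element of a set `S` only when that top is some
`t ∈ B` and `x ∈ S`, and then `x` becomes the new top. Such an `S` avoids `A` and `z`, so every
other member of `S` is ranked below `x` in at least three quarters of the votes. Since `|S| ≤ 3`,
`x` fails to be the top of `S` in at most half of the votes, whereas `t` fails in at least three
quarters of them. So no set `S` contributes more to the distance after the move, and
`S = {x, head B}` contributes strictly less.
-/

namespace Multiset

variable {β : Type*} (s : Multiset β)

theorem countP_le_countP_of_imp {p q : β → Prop} [DecidablePred p] [DecidablePred q]
    (h : ∀ b, p b → q b) : s.countP p ≤ s.countP q := by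
  simpa only [countP_eq_card_filter] using card_le_card (monotone_filter_right s h)

theorem countP_or_le (p q : β → Prop) [DecidablePred p] [DecidablePred q] :
    s.countP (fun b => p b ∨ q b) ≤ s.countP p + s.countP q := by
  have := congrArg card (filter_add_filter p q s)
  simp only [card_add, ← countP_eq_card_filter] at this
  omega

theorem countP_exists_le_sum {ι : Type*} (T : Finset ι) (p : ι → β → Prop)
    [∀ i, DecidablePred (p i)] :
    s.countP (fun b => ∃ i ∈ T, p i b) ≤ ∑ i ∈ T, s.countP (p i) := by
  induction T using Finset.cons_induction with
  | empty => simp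
  | cons i T hi ih =>
    calc s.countP (fun b => ∃ j ∈ Finset.cons i T hi, p j b)
        = s.countP (fun b => p i b ∨ ∃ j ∈ T, p j b) :=
          countP_congr rfl fun b _ => by simp only [Finset.mem_cons, exists_eq_or_imp]
      _ ≤ s.countP (p i) + s.countP (fun b => ∃ j ∈ T, p j b) := countP_or_le s _ _
      _ ≤ ∑ j ∈ Finset.cons i T hi, s.countP (p j) := by
          rw [Finset.sum_cons]; exact Nat.add_le_add_left ih _

theorem sum_map_ite_one_zero (p : β → Prop) [DecidablePred p] :
    (s.map fun b => if p b then 1 else 0).sum = s.countP p := by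
  induction s using Multiset.induction_on with
  | empty => simp
  | cons b s ih => simp only [map_cons, sum_cons, countP_cons, ih, add_comm]

end Multiset

theorem IsRanking.moveForward {P B Q : List α} {x : α} (hL : IsRanking (P ++ (B ++ x :: Q))) :
    IsRanking (P ++ x :: (B ++ Q)) :=
  have hperm := List.perm_middle.append_left P
  ⟨hperm.nodup_iff.1 hL.1, fun a => hperm.mem_iff.1 (hL.2 a)⟩

section

variable [DecidableEq α]

abbrev IsTopOf (l : List α) (S : Finset α) (t : α) : Prop :=
  t ∈ S ∧ ∀ c ∈ S, l.idxOf t ≤ l.idxOf c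

/-- The condition defining the sets counted by `d3 l v`. -/
def Disagree3 (l v : List α) (S : Finset α) : Prop :=
  S.card ≤ 3 ∧ ∃ a ∈ S, ∃ b ∈ S, a ≠ b ∧
    (∀ c ∈ S, l.idxOf a ≤ l.idxOf c) ∧ (∀ c ∈ S, v.idxOf b ≤ v.idxOf c)

instance (l v : List α) (S : Finset α) : Decidable (Disagree3 l v S) :=
  inferInstanceAs (Decidable (_ ∧ _))

theorem d3V_eq_sum_countP [Fintype α] (l : List α) (V : Multiset (List α)) :
    d3V l V = ∑ S ∈ (univ : Finset α).powerset, V.countP (fun v => Disagree3 l v S) := by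
  simp only [d3V, d3, card_filter, Multiset.sum_map_sum, Multiset.sum_map_ite_one_zero]
  exact Finset.sum_congr rfl fun S _ => Multiset.countP_congr rfl fun v _ => rfl

theorem exists_isTopOf (l : List α) {S : Finset α} (hS : S.Nonempty) : ∃ t, IsTopOf l S t :=
  S.exists_min_image _ hS

theorem IsTopOf.eq {l : List α} {S : Finset α} {t u : α} (ht : IsTopOf l S t)
    (hu : IsTopOf l S u) (hl : t ∈ l) : t = u :=
  (List.idxOf_inj hl).1 (le_antisymm (ht.2 u hu.1) (hu.2 t ht.1))

theorem disagree3_iff {l v : List α} {S : Finset α} {t : α} (hS : S.card ≤ 3)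
    (ht : IsTopOf l S t) (hl : t ∈ l) (hv : ∀ c, c ∈ v) :
    Disagree3 l v S ↔ ¬ IsTopOf v S t := by
  constructor
  · rintro ⟨-, a, ha, b, hb, hab, hal, hbv⟩ htv
    exact hab ((ht.eq ⟨ha, hal⟩ hl).symm.trans (htv.eq ⟨hb, hbv⟩ (hv t)))
  · intro htv
    obtain ⟨u, hu⟩ := exists_isTopOf v ⟨t, ht.1⟩
    exact ⟨hS, t, ht.1, u, hu.1, fun h => htv (h ▸ hu), ht.2, hu.2⟩

theorem notMem_of_isTopOf_append {P R : List α} {S : Finset α} {t c : α}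
    (ht : IsTopOf (P ++ R) S t) (htP : t ∉ P) (hc : c ∈ S) : c ∉ P := by
  intro hcP
  have := ht.2 c hc
  rw [List.idxOf_append_of_notMem htP, List.idxOf_append_of_mem hcP] at this
  have := List.idxOf_lt_length_iff.2 hcP
  omega

section Profile

variable {V : Multiset (List α)}

theorem geq_three_quarters_iff {x y : α} :
    geq V (3/4) x y ↔ 3 * V.card ≤ 4 * nn2 V x y := by
  rw [geq, nn2, ← Nat.cast_le (α := ℝ)]
  push_cast
  constructor <;> intro h <;> linarith

theorem nn2_add_nn2 {x y : α} (hV : ∀ v ∈ V, x ∈ v) (hxy : x ≠ y) :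
    nn2 V x y + nn2 V y x = V.card := by
  rw [Multiset.card_eq_countP_add_countP (fun v => v.idxOf x < v.idxOf y) V, nn2, nn2]
  congr 1
  refine Multiset.countP_congr rfl fun v hv => ?_
  have hne : v.idxOf x ≠ v.idxOf y := fun h => hxy ((List.idxOf_inj (hV v hv)).1 h)
  simp only [not_lt, eq_iff_iff]
  omega

theorem countP_disagree3_eq {l : List α} {S : Finset α} {t : α} (hl : IsRanking l)
    (hV : ∀ v ∈ V, IsRanking v) (hS : S.card ≤ 3) (ht : IsTopOf l S t) :
    V.countP (fun v => Disagree3 l v S) = V.countP (fun v => ¬ IsTopOf v S t) :=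
  Multiset.countP_congr rfl fun v hv =>
    propext (disagree3_iff hS ht (hl.2 t) (hV v hv).2)

theorem countP_not_isTopOf_lt {S : Finset α} {x t : α} (hV : ∀ v ∈ V, IsRanking v)
    (hV0 : V ≠ 0) (hS : S.card ≤ 3) (hxS : x ∈ S) (htS : t ∈ S) (htx : t ≠ x)
    (hmaj : ∀ y ∈ S, y ≠ x → 3 * V.card ≤ 4 * nn2 V x y) :
    V.countP (fun v => ¬ IsTopOf v S x) < V.countP (fun v => ¬ IsTopOf v S t) := by
  have hbeaten : ∀ y ∈ S.erase x, 4 * nn2 V y x ≤ V.card := fun y hy => by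
    have hyx := (Finset.mem_erase.1 hy).1
    have := nn2_add_nn2 (fun v hv => (hV v hv).2 x) (Ne.symm hyx)
    linarith [hmaj y (Finset.mem_of_mem_erase hy) hyx]
  have hupper : V.countP (fun v => ¬ IsTopOf v S x) ≤ ∑ y ∈ S.erase x, nn2 V y x := by
    refine (Multiset.countP_le_countP_of_imp V fun v hv => ?_).trans
      (Multiset.countP_exists_le_sum V (S.erase x) fun y v => v.idxOf y < v.idxOf x)
    simp only [IsTopOf, hxS, true_and, not_forall, not_le] at hv
    obtain ⟨y, hy, hyx⟩ := hv
    exact ⟨y, Finset.mem_erase.2 ⟨fun h => (h ▸ hyx).false, hy⟩, hyx⟩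
  have hsum : 4 * ∑ y ∈ S.erase x, nn2 V y x ≤ 2 * V.card := by
    rw [Finset.mul_sum]
    calc ∑ y ∈ S.erase x, 4 * nn2 V y x ≤ (S.erase x).card • V.card :=
          Finset.sum_le_card_nsmul _ _ _ hbeaten
      _ ≤ 2 * V.card := by
          rw [smul_eq_mul, Finset.card_erase_of_mem hxS]
          exact Nat.mul_le_mul_right _ (by omega)
  have hlower : nn2 V x t ≤ V.countP (fun v => ¬ IsTopOf v S t) :=
    Multiset.countP_le_countP_of_imp V fun v hxt htop => (htop.2 x hxS).not_gt hxt
  have hcard : 0 < V.card := Multiset.card_pos.2 hV0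
  linarith [hmaj t htS htx]

end Profile

section MoveForward

variable {P B Q : List α} {x : α} {V : Multiset (List α)}

theorem idxOf_moveForward_cases (hnd : (P ++ (B ++ x :: Q)).Nodup) {a : α}
    (ha : a ∈ P ++ (B ++ x :: Q)) :
    ((P ++ (B ++ x :: Q)).idxOf a < P.length ∧
        (P ++ x :: (B ++ Q)).idxOf a = (P ++ (B ++ x :: Q)).idxOf a) ∨
      (a ∈ B ∧ P.length ≤ (P ++ (B ++ x :: Q)).idxOf a ∧
        (P ++ (B ++ x :: Q)).idxOf a < P.length + B.length ∧
        (P ++ x :: (B ++ Q)).idxOf a = (P ++ (B ++ x :: Q)).idxOf a + 1) ∨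
      (a = x ∧ (P ++ (B ++ x :: Q)).idxOf a = P.length + B.length ∧
        (P ++ x :: (B ++ Q)).idxOf a = P.length) ∨
      (P.length + B.length < (P ++ (B ++ x :: Q)).idxOf a ∧
        (P ++ x :: (B ++ Q)).idxOf a = (P ++ (B ++ x :: Q)).idxOf a) := by
  obtain ⟨-, hndBxQ, hdisj⟩ := List.nodup_append.1 hnd
  obtain ⟨-, hndxQ, hdisjB⟩ := List.nodup_append.1 hndBxQ
  have hxB : x ∉ B := fun h => hdisjB x h x List.mem_cons_self rfl
  rcases List.mem_append.1 ha with haP | haR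
  · left
    simp only [List.idxOf_append_of_mem haP, List.idxOf_lt_length_iff.2 haP, and_true]
  have haP : a ∉ P := fun h => hdisj a h a haR rfl
  simp only [List.idxOf_append_of_notMem haP]
  rw [List.mem_append, List.mem_cons] at haR
  rcases haR with haB | rfl | haQ
  · have hax : a ≠ x := fun h => hxB (h ▸ haB)
    have := List.idxOf_lt_length_iff.2 haB
    rw [List.idxOf_append_of_mem haB, List.idxOf_cons_ne _ (Ne.symm hax),
      List.idxOf_append_of_mem haB]
    exact Or.inr (Or.inl ⟨haB, by omega⟩)
  · rw [List.idxOf_append_of_notMem hxB, List.idxOf_cons_self, List.idxOf_cons_self]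
    exact Or.inr (Or.inr (Or.inl ⟨rfl, by omega⟩))
  · have haB : a ∉ B := fun h => hdisjB a h a (List.mem_cons_of_mem _ haQ) rfl
    have hax : a ≠ x := fun h => (List.nodup_cons.1 hndxQ).1 (h ▸ haQ)
    rw [List.idxOf_append_of_notMem haB, List.idxOf_cons_ne _ (Ne.symm hax),
      List.idxOf_cons_ne _ (Ne.symm hax), List.idxOf_append_of_notMem haB]
    exact Or.inr (Or.inr (Or.inr (by omega)))

theorem idxOf_lt_idxOf_moveForward (hnd : (P ++ (B ++ x :: Q)).Nodup) {a : α} (ha : a ∈ B) :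
    (P ++ (B ++ x :: Q)).idxOf a < (P ++ (B ++ x :: Q)).idxOf x := by
  obtain ⟨-, hndBxQ, hdisj⟩ := List.nodup_append.1 hnd
  have hxB : x ∉ B := fun h => (List.nodup_append.1 hndBxQ).2.2 x h x List.mem_cons_self rfl
  rw [List.idxOf_append_of_notMem fun h => hdisj a h a (List.mem_append_left _ ha) rfl,
    List.idxOf_append_of_notMem fun h => hdisj x h x (by simp) rfl,
    List.idxOf_append_of_mem ha, List.idxOf_append_of_notMem hxB, List.idxOf_cons_self]
  have := List.idxOf_lt_length_iff.2 ha
  omega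

theorem isTopOf_moveForward {S : Finset α} {t : α} (hL : IsRanking (P ++ (B ++ x :: Q)))
    (ht : IsTopOf (P ++ (B ++ x :: Q)) S t) (htx : t ∈ B → x ∉ S) :
    IsTopOf (P ++ x :: (B ++ Q)) S t := by
  refine ⟨ht.1, fun c hc => ?_⟩
  have hle := ht.2 c hc
  have hcx : t ∈ B → c ≠ x := fun htB hcx => htx htB (hcx ▸ hc)
  rcases idxOf_moveForward_cases hL.1 (hL.2 t) with h | h | h | h <;>
    rcases idxOf_moveForward_cases hL.1 (hL.2 c) with h' | h' | h' | h' <;>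
    first
    | omega
    | exact absurd h'.1 (hcx h.1)

theorem isTopOf_moveForward_self {S : Finset α} {t : α} (hxP : x ∉ P)
    (ht : IsTopOf (P ++ (B ++ x :: Q)) S t) (htP : t ∉ P) (hxS : x ∈ S) :
    IsTopOf (P ++ x :: (B ++ Q)) S x := by
  refine ⟨hxS, fun c hc => ?_⟩
  rw [List.idxOf_append_of_notMem hxP, List.idxOf_append_of_notMem
    (notMem_of_isTopOf_append ht htP hc), List.idxOf_cons_self]
  omega

theorem countP_disagree3_moveForward_lt {S : Finset α} {t : α}
    (hL : IsRanking (P ++ (B ++ x :: Q))) (hV : ∀ v ∈ V, IsRanking v) (hV0 : V ≠ 0)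
    (hmaj : ∀ y ∉ P, y ≠ x → 3 * V.card ≤ 4 * nn2 V x y) (hS : S.card ≤ 3)
    (ht : IsTopOf (P ++ (B ++ x :: Q)) S t) (htB : t ∈ B) (hxS : x ∈ S) :
    V.countP (fun v => Disagree3 (P ++ x :: (B ++ Q)) v S) <
      V.countP (fun v => Disagree3 (P ++ (B ++ x :: Q)) v S) := by
  have hL' := hL.moveForward
  have hnd := List.nodup_append.1 hL.1
  have htP : t ∉ P := fun h => hnd.2.2 t h t (List.mem_append_left _ htB) rfl
  have hxP : x ∉ P := fun h => hnd.2.2 x h x (by simp) rfl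
  have htx : t ≠ x := fun h => (List.nodup_append.1 hnd.2.1).2.2 t htB x (by simp) h
  rw [countP_disagree3_eq hL' hV hS (isTopOf_moveForward_self hxP ht htP hxS),
    countP_disagree3_eq hL hV hS ht]
  exact countP_not_isTopOf_lt hV hV0 hS hxS ht.1 htx
    fun y hy hyx => hmaj y (notMem_of_isTopOf_append ht htP hy) hyx

theorem countP_disagree3_moveForward_le (S : Finset α)
    (hL : IsRanking (P ++ (B ++ x :: Q))) (hV : ∀ v ∈ V, IsRanking v) (hV0 : V ≠ 0)
    (hmaj : ∀ y ∉ P, y ≠ x → 3 * V.card ≤ 4 * nn2 V x y) :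
    V.countP (fun v => Disagree3 (P ++ x :: (B ++ Q)) v S) ≤
      V.countP (fun v => Disagree3 (P ++ (B ++ x :: Q)) v S) := by
  by_cases hS : S.card ≤ 3 ∧ S.Nonempty
  swap
  · refine (Multiset.countP_eq_zero.2 fun v _ h => hS ⟨h.1, ?_⟩).trans_le (Nat.zero_le _)
    obtain ⟨a, ha, -⟩ := h.2
    exact ⟨a, ha⟩
  obtain ⟨hS, hne⟩ := hS
  obtain ⟨t, ht⟩ := exists_isTopOf (P ++ (B ++ x :: Q)) hne
  by_cases htx : t ∈ B ∧ x ∈ S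
  · exact (countP_disagree3_moveForward_lt hL hV hV0 hmaj hS ht htx.1 htx.2).le
  have hL' := hL.moveForward
  rw [countP_disagree3_eq hL' hV hS (isTopOf_moveForward hL ht fun htB hxS => htx ⟨htB, hxS⟩),
    countP_disagree3_eq hL hV hS ht]

theorem d3V_moveForward_lt [Fintype α] (hL : IsRanking (P ++ (B ++ x :: Q)))
    (hV : ∀ v ∈ V, IsRanking v) (hV0 : V ≠ 0) (hB : B ≠ [])
    (hmaj : ∀ y ∉ P, y ≠ x → 3 * V.card ≤ 4 * nn2 V x y) :
    d3V (P ++ x :: (B ++ Q)) V < d3V (P ++ (B ++ x :: Q)) V := by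
  set b := B.head hB
  have hb : IsTopOf (P ++ (B ++ x :: Q)) {x, b} b := by
    refine ⟨by simp, fun c hc => ?_⟩
    simp only [Finset.mem_insert, Finset.mem_singleton] at hc
    rcases hc with rfl | rfl
    · exact (idxOf_lt_idxOf_moveForward hL.1 (List.head_mem hB)).le
    · exact le_rfl
  rw [d3V_eq_sum_countP, d3V_eq_sum_countP]
  refine Finset.sum_lt_sum (fun S _ => countP_disagree3_moveForward_le S hL hV hV0 hmaj)
    ⟨{x, b}, Finset.mem_powerset.2 (Finset.subset_univ _), ?_⟩
  exact countP_disagree3_moveForward_lt hL hV hV0 hmaj (Finset.card_le_two.trans (by norm_num))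
    hb (List.head_mem hB) (by simp)

end MoveForward

end

theorem stmt6_general [Fintype α] [DecidableEq α]
    (V : Multiset (List α)) (hV0 : V ≠ 0) (hV : ∀ v ∈ V, IsRanking v)
    (x z : α)
    (hx : ∀ y : α, y ≠ x → y ≠ z → geq V (3/4) x y)
    (A B C' : List α) (hB : B ≠ [])
    (hrank : IsRanking (A ++ z :: (B ++ x :: C'))) :
    d3V (A ++ z :: x :: (B ++ C')) V < d3V (A ++ z :: (B ++ x :: C')) V := by
  have hmaj : ∀ y ∉ A ++ [z], y ≠ x → 3 * V.card ≤ 4 * nn2 V x y := fun y hy hyx =>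
    geq_three_quarters_iff.1 (hx y hyx fun h => hy (by simp [h]))
  simpa using d3V_moveForward_lt (P := A ++ [z]) (by simpa using hrank) hV hV0 hB hmaj

theorem stmt6 [Fintype α] [DecidableEq α]
    (V : Multiset (List α)) (hV0 : V ≠ 0) (hV : ∀ v ∈ V, IsRanking v)
    (x z : α) (hxz : x ≠ z)
    (hz : geq V (3/4) z x)
    (hx : ∀ y : α, y ≠ x → y ≠ z → geq V (3/4) x y)
    (A B C' : List α) (hB : B ≠ [])
    (hrank : IsRanking (A ++ z :: (B ++ x :: C'))) :
    d3V (A ++ z :: x :: (B ++ C')) V < d3V (A ++ z :: (B ++ x :: C')) V :=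
  stmt6_general V hV0 hV x z hx A B C' hB hrank
end

section
/- (3-wise Major Order Theorem) Let x, y be two alternatives of an election with voting profile V over a finite set C of alternatives. Suppose that δ_{xy} > 0 (i.e., x > y is the major order), that Q_{x,y,z} ≥ 0 for all z ∈ C ∖ {x,y}, and that 2δ_{xy} > Σ_{z ∈ C∖{x,y}} max(0, −P_{x,y,z} + Σ_{t ∈ C∖{x,y,z}} max(0, S_{y,x,z,t})). Then x is ranked before y in every 3-wise median of the election. -/
open Finset

variable {α : Type}

/-!
If a 3-wise median `π` ranked `y` before `x`, compare it with the ranking `σ` obtained by moving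
`x` just before `y` and with the ranking `τ` obtained by moving `y` just after `x`. Only the sets
`S ∋ x` (resp. `S ∋ y`) with `|S| ≤ 3` whose top changes contribute to `d³(π,V) - d³(σ,V)`,
each by the margin of its new top over its old one: a `δ` for a pair, a `Q` for a triple. In the
sum of the two differences these margins regroup: every `z` ranked after `x` gives
`2 Q_{x,y,z} ≥ 0`, and every `z` strictly between `y` and `x` gives `P_{x,y,z} - Σ_t S_{y,x,z,t}`,
by the per-vote identities `δ_{xz} + δ_{zy} + Q_{x,y,z} + Q_{z,y,x} = P_{x,y,z}` and
`Q_{x,z,t} + Q_{z,y,t} = -S_{y,x,z,t}`. So the sum is at least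
`2δ_{xy} - Σ_z max(0, -P_{x,y,z} + Σ_t max(0, S_{y,x,z,t})) > 0`, contradicting the minimality
of `π`.
-/

theorem Finset.sum_powerset_card_le_two [DecidableEq α] {M : Type*} [AddCommMonoid M]
    {β : Type*} [LinearOrder β] (E : Finset α) {k : α → β} (hk : Set.InjOn k E)
    (f : Finset α → M) :
    ∑ T ∈ E.powerset with T.card ≤ 2, f T =
      f ∅ + ∑ u ∈ E, (f {u} + ∑ w ∈ E with k u < k w, f {u, w}) := by
  have hpairs : ((E ×ˢ E).filter fun p => k p.1 < k p.2).image
      (fun p => ({p.1, p.2} : Finset α)) = E.powersetCard 2 := by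
    ext T
    simp only [mem_image, mem_filter, mem_product, mem_powersetCard, card_eq_two, Prod.exists]
    constructor
    · rintro ⟨a, b, ⟨⟨ha, hb⟩, hab⟩, rfl⟩
      exact ⟨by simp [insert_subset_iff, ha, hb], a, b, fun h => hab.ne (congrArg k h), rfl⟩
    · rintro ⟨hT, a, b, hab, rfl⟩
      have ha : a ∈ E := hT (by simp)
      have hb : b ∈ E := hT (by simp)
      rcases lt_or_gt_of_ne (hk.ne ha hb hab) with h | h
      · exact ⟨a, b, ⟨⟨ha, hb⟩, h⟩, rfl⟩
      · exact ⟨b, a, ⟨⟨hb, ha⟩, h⟩, pair_comm b a⟩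
  have hinj : Set.InjOn (fun p : α × α => ({p.1, p.2} : Finset α))
      ((E ×ˢ E).filter fun p => k p.1 < k p.2) := by
    rintro ⟨a, b⟩ hab ⟨c, d⟩ hcd h
    simp only [coe_filter, mem_product, Set.mem_ofPred_eq] at hab hcd h
    have hc : c ∈ ({a, b} : Finset α) := h ▸ mem_insert_self c {d}
    have hd : d ∈ ({a, b} : Finset α) := h ▸ by simp
    simp only [mem_insert, mem_singleton] at hc hd
    rcases hc with rfl | rfl <;> rcases hd with rfl | rfl
    all_goals
      first | rfl | exact absurd hab.2 (lt_asymm hcd.2) | exact absurd hcd.2 (lt_irrefl _)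
  rw [← sum_fiberwise_of_maps_to (g := card) (t := range 3) (by simp; omega)]
  simp only [sum_range_succ, sum_range_zero, zero_add, filter_filter]
  have hcard : ∀ i ≤ 2,
      (E.powerset.filter fun T => T.card ≤ 2 ∧ T.card = i) = E.powersetCard i :=
    fun i hi => by rw [powersetCard_eq_filter]; exact filter_congr fun T _ => by omega
  rw [hcard 0 (by norm_num), hcard 1 (by norm_num), hcard 2 le_rfl, powersetCard_zero,
    powersetCard_one, ← hpairs, sum_image hinj, sum_singleton, sum_map, sum_add_distrib,
    add_assoc]
  congr 2
  exact sum_finset_product _ _ _ fun p => by simp [and_assoc]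

theorem Multiset.natCast_countP_eq_sum {β : Type*} (V : Multiset β) (p : β → Prop)
    [DecidablePred p] : (V.countP p : ℤ) = (V.map fun v => if p v then (1 : ℤ) else 0).sum := by
  induction V using Multiset.induction_on with
  | empty => simp
  | cons v V ih => by_cases h : p v <;> simp [h, ih, add_comm]

section Ranking

variable [DecidableEq α] {l m : List α} {S T : Finset α} {a b c u : α}

theorem IsRanking.idxOf_inj (hl : IsRanking l) : l.idxOf a = l.idxOf b ↔ a = b :=
  List.idxOf_inj (hl.2 a)

theorem IsRanking.idxOf_ne (hl : IsRanking l) (h : a ≠ b) : l.idxOf a ≠ l.idxOf b :=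
  mt hl.idxOf_inj.1 h

theorem ne_of_idxOf_lt (h : l.idxOf a < l.idxOf b) : a ≠ b :=
  ne_of_apply_ne (l.idxOf ·) h.ne

def topIn (l : List α) (S : Finset α) : Option α := l.find? (· ∈ S)

theorem topIn_eq_some_iff (hl : IsRanking l) :
    topIn l S = some a ↔ a ∈ S ∧ ∀ b ∈ S, l.idxOf a ≤ l.idxOf b := by
  simp only [topIn, List.find?_eq_some_iff_getElem, decide_eq_true_eq, Bool.not_eq_true',
    decide_eq_false_iff_not]
  refine ⟨fun ⟨ha, i, hi, hia, hlt⟩ => ⟨ha, fun b hb => ?_⟩, fun ⟨ha, hmin⟩ => ⟨ha, ?_⟩⟩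
  · have hb' := List.idxOf_lt_length_iff.mpr (hl.2 b)
    rw [← hia, hl.1.idxOf_getElem]
    by_contra! h
    exact hlt _ h (by rwa [List.getElem_idxOf hb'])
  · have ha' := List.idxOf_lt_length_iff.mpr (hl.2 a)
    refine ⟨_, ha', List.getElem_idxOf ha', fun j hj hjS => ?_⟩
    have := hmin _ hjS
    rw [hl.1.idxOf_getElem] at this
    omega

theorem topIn_eq_none_iff (hl : IsRanking l) : topIn l S = none ↔ S = ∅ := by
  simp only [topIn, List.find?_eq_none, decide_eq_true_eq]
  exact ⟨fun h => eq_empty_of_forall_notMem fun b => h b (hl.2 b), by rintro rfl; simp⟩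

theorem topIn_eq_topIn (hl : IsRanking l) (hm : IsRanking m)
    (h : ∀ a ∈ S, ∀ b ∈ S, l.idxOf a ≤ l.idxOf b ↔ m.idxOf a ≤ m.idxOf b) :
    topIn l S = topIn m S := by
  ext a
  simp only [topIn_eq_some_iff hl, topIn_eq_some_iff hm]
  exact and_congr_right fun ha => forall₂_congr fun b hb => h a ha b hb

theorem topIn_singleton (hl : IsRanking l) : topIn l {a} = some a :=
  (topIn_eq_some_iff hl).2 ⟨mem_singleton_self a, by simp⟩

theorem topIn_pair (hl : IsRanking l) (h : l.idxOf a < l.idxOf b) : topIn l {a, b} = some a :=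
  (topIn_eq_some_iff hl).2 ⟨mem_insert_self a _, by simp [h.le]⟩

theorem topIn_insert (hl : IsRanking l) (hu : topIn l T = some u) :
    topIn l (insert c T) = some (if l.idxOf u < l.idxOf c then u else c) := by
  rw [topIn_eq_some_iff hl] at hu ⊢
  obtain ⟨hu, hmin⟩ := hu
  split_ifs with h
  · exact ⟨mem_insert_of_mem hu, by simpa [h.le] using hmin⟩
  · exact ⟨mem_insert_self c T, by simpa using fun b hb => (not_lt.1 h).trans (hmin b hb)⟩

theorem exists_isRanking_idxOf_le_iff [Fintype α] {β : Type*} [LinearOrder β] {k : α → β}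
    (hk : Function.Injective k) :
    ∃ l : List α, IsRanking l ∧ ∀ a b, l.idxOf a ≤ l.idxOf b ↔ k a ≤ k b := by
  set l := (univ : Finset α).toList.mergeSort (fun a b => decide (k a ≤ k b))
  have hperm : l.Perm (univ : Finset α).toList := List.mergeSort_perm _ _
  have hl : IsRanking l := ⟨(nodup_toList _).perm hperm.symm, fun a => by simp [hperm.mem_iff]⟩
  have hsorted : l.Pairwise (fun a b => k a < k b) :=
    ((List.pairwise_mergeSort
      (fun a b c hab hbc => by simp only [decide_eq_true_eq] at *; exact hab.trans hbc)
      (fun a b => by simpa using le_total _ _) _).and hl.1).imp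
      fun ⟨hab, hne⟩ => lt_of_le_of_ne (by simpa using hab) (hk.ne hne)
  have hlt : ∀ a b, l.idxOf a < l.idxOf b → k a < k b := by
    intro a b hab
    have ha := List.idxOf_lt_length_iff.mpr (hl.2 a)
    have hb := List.idxOf_lt_length_iff.mpr (hl.2 b)
    simpa only [List.getElem_idxOf] using List.pairwise_iff_getElem.mp hsorted _ _ ha hb hab
  refine ⟨l, hl, fun a b => ⟨fun hab => ?_, fun hab => not_lt.1 fun hba => ?_⟩⟩
  · rcases hab.lt_or_eq with hab | hab
    · exact (hlt a b hab).le
    · rw [hl.idxOf_inj.1 hab]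
  · exact (hlt b a hba).not_ge hab

end Ranking

section Distance

variable [DecidableEq α] {V : Multiset (List α)} {l m : List α}

def topCount (V : Multiset (List α)) (S : Finset α) (o : Option α) : ℕ :=
  V.countP fun v => topIn v S = o

def agreeGain (V : Multiset (List α)) (l m : List α) (S : Finset α) : ℤ :=
  topCount V S (topIn m S) - topCount V S (topIn l S)

theorem agreeGain_eq_zero {S : Finset α} (h : topIn l S = topIn m S) :
    agreeGain V l m S = 0 := by
  simp [agreeGain, h]

variable [Fintype α]

theorem d3_eq_card_filter (hl : IsRanking l) (hm : IsRanking m) :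
    d3 l m = #{S ∈ (univ : Finset α).powerset | S.card ≤ 3 ∧ topIn l S ≠ topIn m S} := by
  refine congrArg card (filter_congr fun S _ => and_congr_right fun _ => ⟨?_, fun hne => ?_⟩)
  · rintro ⟨a, ha, b, hb, hab, hla, hmb⟩
    rw [(topIn_eq_some_iff hl).2 ⟨ha, hla⟩, (topIn_eq_some_iff hm).2 ⟨hb, hmb⟩]
    simpa using hab
  · obtain ⟨a, ha⟩ : ∃ a, topIn l S = some a := Option.ne_none_iff_exists'.1 fun h => hne <| by
      rw [h, (topIn_eq_none_iff hm).2 ((topIn_eq_none_iff hl).1 h)]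
    obtain ⟨b, hb⟩ : ∃ b, topIn m S = some b := Option.ne_none_iff_exists'.1 fun h => hne <| by
      rw [h, (topIn_eq_none_iff hl).2 ((topIn_eq_none_iff hm).1 h)]
    rw [ha, hb, Ne, Option.some_inj] at hne
    rw [topIn_eq_some_iff hl] at ha
    rw [topIn_eq_some_iff hm] at hb
    exact ⟨a, ha.1, b, hb.1, hne, ha.2, hb.2⟩

theorem natCast_d3V (hl : IsRanking l) (hV : ∀ v ∈ V, IsRanking v) :
    (d3V l V : ℤ) = ∑ S ∈ (univ : Finset α).powerset with S.card ≤ 3,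
      ((V.card : ℤ) - topCount V S (topIn l S)) := by
  have hvote : ∀ v ∈ V, (d3 l v : ℤ) = ∑ S ∈ (univ : Finset α).powerset with S.card ≤ 3,
      if ¬ topIn v S = topIn l S then (1 : ℤ) else 0 := fun v hv => by
    rw [d3_eq_card_filter hl (hV v hv), ← filter_filter, card_filter]
    push_cast
    simp only [eq_comm (a := topIn v _)]
  rw [d3V, Nat.cast_multiset_sum, Multiset.map_map, Function.comp_def,
    Multiset.map_congr rfl hvote]
  simp only [Finset.sum_eq_multiset_sum]
  rw [Multiset.sum_map_sum_map]
  refine congrArg _ (Multiset.map_congr rfl fun S _ => ?_)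
  rw [← Multiset.natCast_countP_eq_sum, topCount,
    Multiset.card_eq_countP_add_countP (fun v => topIn v S = topIn l S)]
  push_cast
  ring

theorem natCast_d3V_sub_d3V (hV : ∀ v ∈ V, IsRanking v) (hl : IsRanking l) (hm : IsRanking m)
    (c : α) (hlm : ∀ S, c ∉ S → topIn l S = topIn m S) :
    (d3V l V : ℤ) - d3V m V = ∑ T ∈ (univ.erase c).powerset with T.card ≤ 2,
      agreeGain V l m (insert c T) := by
  rw [natCast_d3V hl hV, natCast_d3V hm hV, ← sum_sub_distrib]
  have huniv : (univ : Finset α) = insert c (univ.erase c) := (insert_erase (mem_univ c)).symm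
  conv_lhs => rw [huniv]
  simp only [sum_filter, sub_sub_sub_cancel_left]
  rw [sum_powerset_insert (notMem_erase c univ), sum_eq_zero, zero_add]
  · refine sum_congr rfl fun T hT => ?_
    rw [card_insert_of_notMem fun h => notMem_erase c univ (mem_powerset.1 hT h), agreeGain]
    exact if_congr (by omega) rfl rfl
  · intro T hT
    rw [hlm T fun h => notMem_erase c univ (mem_powerset.1 hT h)]
    simp

end Distance

section Counts

variable [DecidableEq α] {V : Multiset (List α)} {a b c d x y z t : α}

theorem nn2_eq_add_nn3 (hV : ∀ v ∈ V, IsRanking v) (hab : a ≠ b) (hac : a ≠ c) (hbc : b ≠ c) :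
    nn2 V a b = nn3 V a b c + nn3 V a c b + nn3 V c a b := by
  zify
  simp only [nn2, nn3, Multiset.natCast_countP_eq_sum, ← Multiset.sum_map_add]
  refine congrArg _ (Multiset.map_congr rfl fun v hv => ?_)
  have := (hV v hv).idxOf_ne hab
  have := (hV v hv).idxOf_ne hac
  have := (hV v hv).idxOf_ne hbc
  split_ifs <;> omega

theorem nn3_eq_add_nn4 (hV : ∀ v ∈ V, IsRanking v) (hab : a ≠ b) (hac : a ≠ c) (hbc : b ≠ c)
    (hda : d ≠ a) (hdb : d ≠ b) (hdc : d ≠ c) :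
    nn3 V a b c = nn4 V d a b c + nn4 V a d b c + nn4 V a b d c + nn4 V a b c d := by
  zify
  simp only [nn3, nn4, Multiset.natCast_countP_eq_sum, ← Multiset.sum_map_add]
  refine congrArg _ (Multiset.map_congr rfl fun v hv => ?_)
  have := (hV v hv).idxOf_ne hab
  have := (hV v hv).idxOf_ne hac
  have := (hV v hv).idxOf_ne hbc
  have := (hV v hv).idxOf_ne hda
  have := (hV v hv).idxOf_ne hdb
  have := (hV v hv).idxOf_ne hdc
  split_ifs <;> omega

theorem topCount_pair (hV : ∀ v ∈ V, IsRanking v) (hab : a ≠ b) :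
    topCount V {a, b} (some a) = nn2 V a b := by
  refine Multiset.countP_congr rfl fun v hv => propext ?_
  have := (hV v hv).idxOf_ne hab
  simp only [topIn_eq_some_iff (hV v hv), mem_insert, mem_singleton, forall_eq_or_imp,
    forall_eq, true_or, le_refl, true_and]
  omega

theorem topCount_triple (hV : ∀ v ∈ V, IsRanking v) (hab : a ≠ b) (hac : a ≠ c) (hbc : b ≠ c) :
    topCount V {a, b, c} (some a) = nn3 V a b c + nn3 V a c b := by
  zify
  simp only [topCount, nn3, Multiset.natCast_countP_eq_sum, ← Multiset.sum_map_add]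
  refine congrArg _ (Multiset.map_congr rfl fun v hv => ?_)
  have := (hV v hv).idxOf_ne hab
  have := (hV v hv).idxOf_ne hac
  have := (hV v hv).idxOf_ne hbc
  simp only [topIn_eq_some_iff (hV v hv), mem_insert, mem_singleton, forall_eq_or_imp,
    forall_eq, true_or, le_refl, true_and]
  split_ifs <;> omega

theorem del_eq_topCount_sub (hV : ∀ v ∈ V, IsRanking v) (hab : a ≠ b) :
    del V a b = topCount V {a, b} (some a) - topCount V {a, b} (some b) := by
  rw [del, topCount_pair hV hab, pair_comm, topCount_pair hV hab.symm]

theorem Qq_eq_topCount_sub (hV : ∀ v ∈ V, IsRanking v) (hab : a ≠ b) (hac : a ≠ c)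
    (hbc : b ≠ c) :
    Qq V a b c = topCount V {a, b, c} (some a) - topCount V {a, b, c} (some b) := by
  rw [Qq, topCount_triple hV hab hac hbc, insert_comm, topCount_triple hV hab.symm hbc hac]
  push_cast
  ring

theorem del_add_del_add_Qq_add_Qq (hV : ∀ v ∈ V, IsRanking v) (hxy : x ≠ y) (hxz : x ≠ z)
    (hyz : y ≠ z) :
    del V x z + del V z y + Qq V x y z + Qq V z y x = Pq V x y z := by
  rw [del, del, nn2_eq_add_nn3 hV hxz hxy hyz.symm, nn2_eq_add_nn3 hV hxz.symm hyz.symm hxy,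
    nn2_eq_add_nn3 hV hyz.symm hxz.symm hxy.symm, nn2_eq_add_nn3 hV hyz hxy.symm hxz.symm,
    Qq, Qq, Pq]
  push_cast
  ring

theorem Qq_add_Qq_eq_neg_Ss (hV : ∀ v ∈ V, IsRanking v) (hxy : x ≠ y) (hxz : x ≠ z)
    (hxt : x ≠ t) (hyz : y ≠ z) (hyt : y ≠ t) (hzt : z ≠ t) :
    Qq V x z t + Qq V z y t = - Ss V y x z t := by
  rw [Qq, Qq, Ss, Rr, Rr,
    nn3_eq_add_nn4 hV hxz hxt hzt hxy.symm hyz hyt (d := y),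
    nn3_eq_add_nn4 hV hxt hxz hzt.symm hxy.symm hyt hyz (d := y),
    nn3_eq_add_nn4 hV hxz.symm hzt hxt hyz hxy.symm hyt (d := y),
    nn3_eq_add_nn4 hV hzt hxz.symm hxt.symm hyz hyt hxy.symm (d := y),
    nn3_eq_add_nn4 hV hyz.symm hzt hyt hxz hxy hxt (d := x),
    nn3_eq_add_nn4 hV hzt hyz.symm hyt.symm hxz hxt hxy (d := x),
    nn3_eq_add_nn4 hV hyz hyt hzt hxy hxz hxt (d := x),
    nn3_eq_add_nn4 hV hyt hyz hzt.symm hxy hxt hxz (d := x)]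
  push_cast
  ring

end Counts

section Moves

variable [Fintype α] [DecidableEq α] {V : Multiset (List α)} {π : List α} {x y : α}

theorem natCast_d3V_sub_d3V_eq_sum_pairs {l m : List α} (hV : ∀ v ∈ V, IsRanking v)
    (hl : IsRanking l) (hm : IsRanking m) (c : α) (hlm : ∀ S, c ∉ S → topIn l S = topIn m S) :
    (d3V l V : ℤ) - d3V m V = ∑ u ∈ univ.erase c, (agreeGain V l m {c, u} +
      ∑ w ∈ univ.erase c with l.idxOf u < l.idxOf w, agreeGain V l m {c, u, w}) := by
  rw [natCast_d3V_sub_d3V hV hl hm c hlm,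
    sum_powerset_card_le_two _ (fun a _ b _ h => hl.idxOf_inj.1 h), insert_empty,
    agreeGain_eq_zero (by rw [topIn_singleton hl, topIn_singleton hm]), zero_add]

/-- Moving `c` of the ranking `π` to the half-integer position `m / 2`. -/
theorem exists_isRanking_relocate (hπ : IsRanking π) (c : α) {m : ℤ} (hm : Odd m) :
    ∃ σ, IsRanking σ ∧ (∀ S, c ∉ S → topIn π S = topIn σ S) ∧
      ∀ T u, c ∉ T → topIn π T = some u →
        topIn σ (insert c T) = some (if 2 * (π.idxOf u : ℤ) < m then u else c) := by
  set k : α → ℤ := fun a => if a = c then m else 2 * π.idxOf a with hk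
  have hkinj : Function.Injective k := fun a b h => by
    obtain ⟨r, rfl⟩ := hm
    simp only [hk] at h
    split_ifs at h with ha hb hb
    · exact ha.trans hb.symm
    all_goals first | omega | exact hπ.idxOf_inj.1 (by omega)
  obtain ⟨σ, hσ, hσk⟩ := exists_isRanking_idxOf_le_iff hkinj
  have hagree : ∀ S, c ∉ S → topIn π S = topIn σ S := fun S hS =>
    topIn_eq_topIn hπ hσ fun a ha b hb => by
      simp [hσk, hk, ne_of_mem_of_not_mem ha hS, ne_of_mem_of_not_mem hb hS]
  refine ⟨σ, hσ, hagree, fun T u hT hu => ?_⟩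
  have hcu : u ≠ c := ne_of_mem_of_not_mem ((topIn_eq_some_iff hπ).1 hu).1 hT
  have hlt : σ.idxOf u < σ.idxOf c ↔ 2 * (π.idxOf u : ℤ) < m := by
    rw [← not_le, hσk, not_le]
    simp [hk, hcu]
  simp only [topIn_insert hσ (hagree T hT ▸ hu), hlt]

theorem exists_d3V_sub_eq_of_move_before (hV : ∀ v ∈ V, IsRanking v) (hπ : IsRanking π)
    (hyx : π.idxOf y < π.idxOf x) :
    ∃ σ, IsRanking σ ∧ (d3V π V : ℤ) - d3V σ V =
      ∑ u ∈ univ.erase x with π.idxOf y ≤ π.idxOf u ∧ π.idxOf u < π.idxOf x,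
        (del V x u + ∑ w ∈ univ.erase x with π.idxOf u < π.idxOf w, Qq V x u w) := by
  obtain ⟨σ, hσ, hagree, htop⟩ :=
    exists_isRanking_relocate hπ x (m := 2 * π.idxOf y - 1) ⟨π.idxOf y - 1, by ring⟩
  refine ⟨σ, hσ, ?_⟩
  rw [natCast_d3V_sub_d3V_eq_sum_pairs hV hπ hσ x hagree, sum_filter]
  refine sum_congr rfl fun u hu => ?_
  have hux := ne_of_mem_erase hu
  have hgain : ∀ T, x ∉ T → topIn π T = some u → agreeGain V π σ (insert x T) =
      if π.idxOf y ≤ π.idxOf u ∧ π.idxOf u < π.idxOf x then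
        (topCount V (insert x T) (some x) : ℤ) - topCount V (insert x T) (some u) else 0 := by
    intro T hT h
    rw [agreeGain, htop T u hT h, topIn_insert hπ h]
    split_ifs <;> omega
  simp only [hgain {u} (by simpa using hux.symm) (topIn_singleton hπ)]
  rw [sum_congr rfl fun w hw => hgain {u, w}
    (by simp [hux.symm, (ne_of_mem_erase (mem_filter.1 hw).1).symm])
    (topIn_pair hπ (mem_filter.1 hw).2)]
  split_ifs
  · refine congrArg₂ _ (del_eq_topCount_sub hV hux.symm).symm (sum_congr rfl fun w hw => ?_)
    obtain ⟨hw, huw⟩ := mem_filter.1 hw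
    exact (Qq_eq_topCount_sub hV hux.symm (ne_of_mem_erase hw).symm (ne_of_idxOf_lt huw)).symm
  · simp

theorem exists_d3V_sub_eq_of_move_after (hV : ∀ v ∈ V, IsRanking v) (hπ : IsRanking π)
    (hyx : π.idxOf y < π.idxOf x) :
    ∃ τ, IsRanking τ ∧ (d3V π V : ℤ) - d3V τ V =
      ∑ u ∈ univ.erase y with π.idxOf y < π.idxOf u ∧ π.idxOf u ≤ π.idxOf x,
        (del V u y + ∑ w ∈ univ.erase y with π.idxOf u < π.idxOf w, Qq V u y w) := by
  obtain ⟨τ, hτ, hagree, htop⟩ :=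
    exists_isRanking_relocate hπ y (m := 2 * π.idxOf x + 1) ⟨π.idxOf x, by ring⟩
  refine ⟨τ, hτ, ?_⟩
  rw [natCast_d3V_sub_d3V_eq_sum_pairs hV hπ hτ y hagree, sum_filter]
  refine sum_congr rfl fun u hu => ?_
  have huy := ne_of_mem_erase hu
  have huy' := hπ.idxOf_ne huy
  have hgain : ∀ T, y ∉ T → topIn π T = some u → agreeGain V π τ (insert y T) =
      if π.idxOf y < π.idxOf u ∧ π.idxOf u ≤ π.idxOf x then
        (topCount V (insert y T) (some u) : ℤ) - topCount V (insert y T) (some y) else 0 := by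
    intro T hT h
    rw [agreeGain, htop T u hT h, topIn_insert hπ h]
    split_ifs <;> omega
  simp only [hgain {u} (by simpa using huy.symm) (topIn_singleton hπ)]
  rw [sum_congr rfl fun w hw => hgain {u, w}
    (by simp [huy.symm, (ne_of_mem_erase (mem_filter.1 hw).1).symm])
    (topIn_pair hπ (mem_filter.1 hw).2)]
  split_ifs
  · refine congrArg₂ _ ?_ (sum_congr rfl fun w hw => ?_)
    · rw [del_eq_topCount_sub hV huy, pair_comm]
    · obtain ⟨hw, huw⟩ := mem_filter.1 hw
      rw [Qq_eq_topCount_sub hV huy (ne_of_idxOf_lt huw) (ne_of_mem_erase hw).symm,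
        insert_comm]
  · simp

end Moves

section MajorOrder

variable [Fintype α] [DecidableEq α] {V : Multiset (List α)} {π : List α} {x y : α}

theorem sum_move_gains_eq (hV : ∀ v ∈ V, IsRanking v) (hπ : IsRanking π)
    (hyx : π.idxOf y < π.idxOf x) :
    (∑ u ∈ univ.erase x with π.idxOf y ≤ π.idxOf u ∧ π.idxOf u < π.idxOf x,
        (del V x u + ∑ w ∈ univ.erase x with π.idxOf u < π.idxOf w, Qq V x u w)) +
      (∑ u ∈ univ.erase y with π.idxOf y < π.idxOf u ∧ π.idxOf u ≤ π.idxOf x,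
        (del V u y + ∑ w ∈ univ.erase y with π.idxOf u < π.idxOf w, Qq V u y w)) =
      2 * del V x y + 2 * ∑ w ∈ univ with π.idxOf x < π.idxOf w, Qq V x y w +
        ∑ z ∈ univ with π.idxOf y < π.idxOf z ∧ π.idxOf z < π.idxOf x,
          (Pq V x y z - ∑ w ∈ univ.erase x with π.idxOf z < π.idxOf w, Ss V y x z w) := by
  set B := univ.filter fun z => π.idxOf y < π.idxOf z ∧ π.idxOf z < π.idxOf x
  set D := univ.filter fun w => π.idxOf x < π.idxOf w
  have hyB : y ∉ B := by simp [B]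
  have hxB : x ∉ B := by simp [B]
  have hBD : Disjoint B D := disjoint_filter.2 fun _ _ h => by omega
  have h1 : (univ.erase x).filter (fun u => π.idxOf y ≤ π.idxOf u ∧ π.idxOf u < π.idxOf x) =
      insert y B := by
    ext u
    simp only [B, mem_filter, mem_erase, mem_insert, mem_univ, true_and, and_true, ne_eq,
      ← hπ.idxOf_inj]
    omega
  have h2 : (univ.erase y).filter (fun u => π.idxOf y < π.idxOf u ∧ π.idxOf u ≤ π.idxOf x) =
      insert x B := by
    ext u
    simp only [B, mem_filter, mem_erase, mem_insert, mem_univ, true_and, and_true, ne_eq,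
      ← hπ.idxOf_inj]
    omega
  have h3 : (univ.erase x).filter (fun w => π.idxOf y < π.idxOf w) = B ∪ D := by
    ext u
    simp only [B, D, mem_filter, mem_erase, mem_union, mem_univ, true_and, and_true, ne_eq,
      ← hπ.idxOf_inj]
    omega
  have h4 : (univ.erase y).filter (fun w => π.idxOf x < π.idxOf w) = D := by
    ext u
    simp only [D, mem_filter, mem_erase, mem_univ, true_and, and_true, ne_eq, ← hπ.idxOf_inj]
    omega
  have hz : ∀ z ∈ B, (del V x z + ∑ w ∈ univ.erase x with π.idxOf z < π.idxOf w, Qq V x z w) +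
      (del V z y + ∑ w ∈ univ.erase y with π.idxOf z < π.idxOf w, Qq V z y w) + Qq V x y z =
      Pq V x y z - ∑ w ∈ univ.erase x with π.idxOf z < π.idxOf w, Ss V y x z w := by
    intro z hz
    obtain ⟨hyz_lt, hzx_lt⟩ := (mem_filter.1 hz).2
    have hW : (univ.erase y).filter (fun w => π.idxOf z < π.idxOf w) =
        insert x ((univ.erase x).filter fun w => π.idxOf z < π.idxOf w) := by
      ext u
      simp only [mem_filter, mem_erase, mem_insert, mem_univ, and_true, ne_eq, ← hπ.idxOf_inj]
      omega
    have hxW : x ∉ (univ.erase x).filter fun w => π.idxOf z < π.idxOf w := by simp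
    have hxy := (ne_of_idxOf_lt hyx).symm
    have hxz := (ne_of_idxOf_lt hzx_lt).symm
    have hyz := ne_of_idxOf_lt hyz_lt
    have hS : ∑ w ∈ univ.erase x with π.idxOf z < π.idxOf w, Ss V y x z w =
        -∑ w ∈ univ.erase x with π.idxOf z < π.idxOf w, (Qq V x z w + Qq V z y w) := by
      rw [← sum_neg_distrib]
      refine sum_congr rfl fun w hw => ?_
      obtain ⟨hwx, hzw⟩ := mem_filter.1 hw
      rw [Qq_add_Qq_eq_neg_Ss hV hxy hxz (ne_of_mem_erase hwx).symm hyz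
        (ne_of_idxOf_lt (hyz_lt.trans hzw)) (ne_of_idxOf_lt hzw), neg_neg]
    rw [hW, sum_insert hxW, hS, ← del_add_del_add_Qq_add_Qq hV hxy hxz hyz, sum_add_distrib]
    ring
  rw [h1, h2, sum_insert hyB, sum_insert hxB, h3, h4, sum_union hBD, ← sum_congr rfl hz]
  simp only [sum_add_distrib]
  ring

theorem neg_sum_max_le_move_gains (hπ : IsRanking π) (hyx : π.idxOf y < π.idxOf x)
    (hQ : ∀ z : α, z ≠ x → z ≠ y → 0 ≤ Qq V x y z) :
    -∑ z ∈ univ \ {x, y}, max 0 (-Pq V x y z + ∑ t ∈ univ \ {x, y, z}, max 0 (Ss V y x z t)) ≤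
      2 * ∑ w ∈ univ with π.idxOf x < π.idxOf w, Qq V x y w +
        ∑ z ∈ univ with π.idxOf y < π.idxOf z ∧ π.idxOf z < π.idxOf x,
          (Pq V x y z - ∑ w ∈ univ.erase x with π.idxOf z < π.idxOf w, Ss V y x z w) := by
  have hD : 0 ≤ ∑ w ∈ univ with π.idxOf x < π.idxOf w, Qq V x y w := sum_nonneg fun w hw => by
    have hxw := (mem_filter.1 hw).2
    exact hQ w (ne_of_idxOf_lt hxw).symm (ne_of_idxOf_lt (hyx.trans hxw)).symm
  have hz : ∀ z ∈ univ.filter fun z => π.idxOf y < π.idxOf z ∧ π.idxOf z < π.idxOf x,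
      -max 0 (-Pq V x y z + ∑ t ∈ univ \ {x, y, z}, max 0 (Ss V y x z t)) ≤
        Pq V x y z - ∑ w ∈ univ.erase x with π.idxOf z < π.idxOf w, Ss V y x z w := by
    intro z hz
    have hyz := (mem_filter.1 hz).2.1
    have hW : (univ.erase x).filter (fun w => π.idxOf z < π.idxOf w) ⊆ univ \ {x, y, z} :=
      fun w hw => by
        simp only [mem_filter, mem_erase, mem_univ, and_true, ne_eq, ← hπ.idxOf_inj] at hw
        simp only [mem_sdiff, mem_univ, true_and, mem_insert, mem_singleton, ← hπ.idxOf_inj]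
        omega
    have hS := (sum_le_sum fun w _ => le_max_right 0 (Ss V y x z w)).trans
      (sum_le_sum_of_subset_of_nonneg hW fun _ _ _ => le_max_left 0 _)
    linarith [le_max_right 0 (-Pq V x y z + ∑ t ∈ univ \ {x, y, z}, max 0 (Ss V y x z t))]
  have hB : univ.filter (fun z => π.idxOf y < π.idxOf z ∧ π.idxOf z < π.idxOf x) ⊆
      univ \ {x, y} := fun z hz => by
    simp only [mem_filter, mem_univ, true_and] at hz
    simp only [mem_sdiff, mem_univ, true_and, mem_insert, mem_singleton, ← hπ.idxOf_inj]
    omega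
  have hsub := sum_le_sum_of_subset_of_nonneg hB fun z _ _ =>
    le_max_left 0 (-Pq V x y z + ∑ t ∈ univ \ {x, y, z}, max 0 (Ss V y x z t))
  have hsumz := sum_le_sum hz
  rw [sum_neg_distrib] at hsumz
  linarith

end MajorOrder

theorem stmt12_general [Fintype α] [DecidableEq α]
    (V : Multiset (List α)) (hV : ∀ v ∈ V, IsRanking v)
    (x y : α) (hxy : x ≠ y)
    (hQ : ∀ z : α, z ≠ x → z ≠ y → 0 ≤ Qq V x y z)
    (hsum : 2 * del V x y > ∑ z ∈ (Finset.univ : Finset α) \ {x, y},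
      max 0 (- Pq V x y z + ∑ t ∈ (Finset.univ : Finset α) \ {x, y, z}, max 0 (Ss V y x z t))) :
    ∀ π : List α, IsMedian3 V π → π.idxOf x < π.idxOf y := by
  intro π ⟨hπ, hmin⟩
  by_contra! hle
  have hyx : π.idxOf y < π.idxOf x := lt_of_le_of_ne hle (hπ.idxOf_ne hxy.symm)
  obtain ⟨σ, hσ, hσπ⟩ := exists_d3V_sub_eq_of_move_before hV hπ hyx
  obtain ⟨τ, hτ, hτπ⟩ := exists_d3V_sub_eq_of_move_after hV hπ hyx
  have hle_σ : (d3V π V : ℤ) ≤ d3V σ V := by exact_mod_cast hmin σ hσ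
  have hle_τ : (d3V π V : ℤ) ≤ d3V τ V := by exact_mod_cast hmin τ hτ
  have hgain := sum_move_gains_eq hV hπ hyx
  have hlower := neg_sum_max_le_move_gains hπ hyx hQ
  linarith

theorem stmt12 [Fintype α] [DecidableEq α]
    (V : Multiset (List α)) (hV : ∀ v ∈ V, IsRanking v)
    (x y : α) (hxy : x ≠ y)
    (hmaj : 0 < del V x y)
    (hQ : ∀ z : α, z ≠ x → z ≠ y → 0 ≤ Qq V x y z)
    (hsum : 2 * del V x y > ∑ z ∈ (Finset.univ : Finset α) \ {x, y},
      max 0 (- Pq V x y z + ∑ t ∈ (Finset.univ : Finset α) \ {x, y, z}, max 0 (Ss V y x z t))) :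
    ∀ π : List α, IsMedian3 V π → π.idxOf x < π.idxOf y :=
  stmt12_general V hV x y hxy hQ hsum
end
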